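/- Let P = (x₁,…,xₙ : r₁,…,r_m) be a finite presentation and w a word in x₁,…,xₙ, and let G_w be the group presented by Q_w (which has n+4 generators and m+5 relators). Then G_w admits a presentation with 2 generators and m+1 relators: there exist m+1 elements of the free group of rank 2 such that the corresponding presented group is isomorphic to G_w. -/

import Mathlib

/-- Generators of the presentation `Q_w`: `Sum.inl i` is the generator `xᵢ`
(for `i : Fin n`), while `Sum.inr 0 = a`, `Sum.inr 1 = α`, `Sum.inr 2 = b`,
`Sum.inr 3 = β`. -/
abbrev QwGen (n : ℕ) := Fin n ⊕ Fin 4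

/-- The relators of the presentation `Q_w`: the relators `r₁, …, r_m` (indexed by
`Sum.inl j`), the relators (iii)/(iv) (indexed by `Sum.inr (Sum.inl i)`, zero-based:
for `i < p` the relator `a^{-qᵢ} xᵢ α^{qᵢ} (β^{-(i+1)} b β^{i+1})⁻¹` and for
`p ≤ i < n` the relator `a^{-(q+i+1)} xᵢ α^{q+i+1} (β^{-(i+1)} b β^{i+1})⁻¹`, where
`q = max {q₁, …, q_p}`), and the relators (i), (ii), (v)
(indexed by `Sum.inr (Sum.inr t)` for `t = 0, 1, 2`). -/
def qwRel (n m p : ℕ) (r : Fin m → FreeGroup (Fin n)) (q : Fin p → ℕ)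
    (w : FreeGroup (Fin n)) : Fin m ⊕ (Fin n ⊕ Fin 3) → FreeGroup (QwGen n) :=
  let a : FreeGroup (QwGen n) := FreeGroup.of (Sum.inr 0)
  let al : FreeGroup (QwGen n) := FreeGroup.of (Sum.inr 1)
  let b : FreeGroup (QwGen n) := FreeGroup.of (Sum.inr 2)
  let be : FreeGroup (QwGen n) := FreeGroup.of (Sum.inr 3)
  let x : Fin n → FreeGroup (QwGen n) := fun i => FreeGroup.of (Sum.inl i)
  let W : FreeGroup (QwGen n) := FreeGroup.map Sum.inl w
  let Q : ℕ := Finset.univ.sup q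
  fun j => match j with
  | Sum.inl j => FreeGroup.map Sum.inl (r j)
  | Sum.inr (Sum.inl i) =>
      if h : (i : ℕ) < p then
        a ^ (-(q ⟨i, h⟩ : ℤ)) * x i * al ^ (q ⟨i, h⟩) *
          (be ^ (-((i : ℕ) + 1 : ℤ)) * b * be ^ ((i : ℕ) + 1))⁻¹
      else
        a ^ (-((Q + (i : ℕ) + 1 : ℕ) : ℤ)) * x i * al ^ (Q + (i : ℕ) + 1) *
          (be ^ (-((i : ℕ) + 1 : ℤ)) * b * be ^ ((i : ℕ) + 1))⁻¹
  | Sum.inr (Sum.inr t) =>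
      if t = 0 then a * al * a⁻¹ * (b ^ 2)⁻¹
      else if t = 1 then al * a * al⁻¹ * (b * be * b⁻¹)⁻¹
      else (W * al ^ 2 * W⁻¹ * (al ^ 2)⁻¹) *
        (be ^ (-((n : ℤ) + 1)) * b * be ^ (n + 1))⁻¹

/-! Tietze transformations. Relator (i) says α = a⁻¹b²a, relator (ii) then says
β = b⁻¹(αaα⁻¹)b, and relator (iii)/(iv) for xᵢ says xᵢ = a^{eᵢ}(β^{-i}bβ^{i})α^{-eᵢ},
where eᵢ is qᵢ or q + i.
Eliminating α, β, x₁, …, xₙ together with these n + 2 relators leaves the generators a, b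
and the m + 1 relators r₁, …, r_m and (v), rewritten as words in a and b. -/

namespace PresentedGroup

variable {α β : Type*} {R : Set (FreeGroup α)} {S : Set (FreeGroup β)}

theorem lift_of (x : FreeGroup α) : FreeGroup.lift of x = mk R x :=
  (FreeGroup.lift_unique (mk R) fun _ => rfl).symm

theorem toGroup_mk {G : Type*} [Group G] {f : α → G} (h : ∀ r ∈ R, FreeGroup.lift f r = 1)
    (x : FreeGroup α) : toGroup h (mk R x) = FreeGroup.lift f x :=
  rfl

theorem lift_mk_comp (f : β → FreeGroup α) (x : FreeGroup β) :
    FreeGroup.lift (fun b => mk R (f b)) x = mk R (FreeGroup.lift f x) :=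
  (FreeGroup.lift_unique ((mk R).comp (FreeGroup.lift f)) (by simp)).symm

def mulEquivOfSubstitution (ψ : FreeGroup α →* FreeGroup β) (f : β → FreeGroup α)
    (hR : ∀ r ∈ R, mk S (ψ r) = 1) (hS : S ⊆ ψ '' R)
    (hψf : ∀ b, mk S (ψ (f b)) = of b)
    (hfψ : ∀ a, mk R (FreeGroup.lift f (ψ (.of a))) = of a) :
    PresentedGroup S ≃* PresentedGroup R :=
  have hfψ' (x : FreeGroup α) : mk R (FreeGroup.lift f (ψ x)) = mk R x :=
    (FreeGroup.lift_unique ((mk R).comp ((FreeGroup.lift f).comp ψ)) hfψ).trans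
      (FreeGroup.lift_unique (mk R) fun _ => rfl).symm
  have hS' : ∀ s ∈ S, FreeGroup.lift (fun b => mk R (f b)) s = 1 := fun s hs => by
    obtain ⟨r, hr, rfl⟩ := hS hs
    rw [lift_mk_comp, hfψ', one_of_mem hr]
  have hR' : ∀ r ∈ R, FreeGroup.lift (fun a => mk S (ψ (.of a))) r = 1 := fun r hr => by
    rw [← FreeGroup.lift_unique ((mk S).comp ψ) (by simp)]
    exact hR r hr
  MonoidHom.toMulEquiv (toGroup hS') (toGroup hR')
    (ext fun b => by
      rw [MonoidHom.comp_apply, toGroup.of, toGroup_mk, ← hψf,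
        ← FreeGroup.lift_unique ((mk S).comp ψ) (by simp)]
      rfl)
    (ext fun a => by
      rw [MonoidHom.comp_apply, toGroup.of, of, toGroup_mk, lift_mk_comp, hfψ]
      rfl)

end PresentedGroup

namespace Qw

variable {G H : Type*} [Group G] [Group H]

def alphaWord (a b : G) : G := a⁻¹ * b ^ 2 * a

def betaWord (a b : G) : G := b⁻¹ * (alphaWord a b * a * (alphaWord a b)⁻¹) * b

def exponent {n p : ℕ} (q : Fin p → ℕ) (i : Fin n) : ℕ :=
  if h : (i : ℕ) < p then q ⟨i, h⟩ else Finset.univ.sup q + i + 1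

-- The values of all generators of `Q_w` forced by relators (i)–(iv) once `a` and `b` are given.
def genValue (n : ℕ) {p : ℕ} (q : Fin p → ℕ) (a b : G) : QwGen n → G :=
  Sum.elim
    (fun i => a ^ exponent q i *
      (betaWord a b ^ (-((i : ℕ) + 1 : ℤ)) * b * betaWord a b ^ ((i : ℕ) + 1)) *
        alphaWord a b ^ (-(exponent q i : ℤ)))
    ![a, alphaWord a b, b, betaWord a b]

theorem map_genValue (φ : G →* H) (n : ℕ) {p : ℕ} (q : Fin p → ℕ) (a b : G) (g : QwGen n) :
    φ (genValue n q a b g) = genValue n q (φ a) (φ b) g := by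
  rcases g with i | k
  · simp [genValue, alphaWord, betaWord]
  · fin_cases k <;> simp [genValue, alphaWord, betaWord]

variable {n m p : ℕ} (r : Fin m → FreeGroup (Fin n)) (q : Fin p → ℕ) (w : FreeGroup (Fin n))
  (v : QwGen n → G)

theorem lift_qwRel_inr_inl (i : Fin n) :
    FreeGroup.lift v (qwRel n m p r q w (.inr (.inl i))) =
      v (.inr 0) ^ (-(exponent q i : ℤ)) * v (.inl i) * v (.inr 1) ^ exponent q i *
        (v (.inr 3) ^ (-((i : ℕ) + 1 : ℤ)) * v (.inr 2) * v (.inr 3) ^ ((i : ℕ) + 1))⁻¹ := by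
  by_cases h : (i : ℕ) < p <;> simp [qwRel, exponent, h]

theorem lift_qwRel_inr_inr_zero :
    FreeGroup.lift v (qwRel n m p r q w (.inr (.inr 0))) =
      v (.inr 0) * v (.inr 1) * (v (.inr 0))⁻¹ * (v (.inr 2) ^ 2)⁻¹ := by
  simp [qwRel]

theorem lift_qwRel_inr_inr_one :
    FreeGroup.lift v (qwRel n m p r q w (.inr (.inr 1))) =
      v (.inr 1) * v (.inr 0) * (v (.inr 1))⁻¹ *
        (v (.inr 2) * v (.inr 3) * (v (.inr 2))⁻¹)⁻¹ := by
  simp [qwRel]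

theorem genValue_eq_iff :
    genValue n q (v (.inr 0)) (v (.inr 2)) = v ↔
      FreeGroup.lift v (qwRel n m p r q w (.inr (.inr 0))) = 1 ∧
      FreeGroup.lift v (qwRel n m p r q w (.inr (.inr 1))) = 1 ∧
      ∀ i, FreeGroup.lift v (qwRel n m p r q w (.inr (.inl i))) = 1 := by
  simp only [lift_qwRel_inr_inr_zero, lift_qwRel_inr_inr_one, lift_qwRel_inr_inl, mul_inv_eq_one]
  constructor
  · intro h
    have hα : v (.inr 1) = alphaWord (v (.inr 0)) (v (.inr 2)) := (congrFun h (.inr 1)).symm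
    have hβ : v (.inr 3) = betaWord (v (.inr 0)) (v (.inr 2)) := (congrFun h (.inr 3)).symm
    refine ⟨?_, ?_, fun i => ?_⟩
    · rw [hα, alphaWord]; group
    · rw [hα, hβ, betaWord]; group
    · rw [← congrFun h (.inl i), hα, hβ]; simp only [genValue, Sum.elim_inl]; group
  · rintro ⟨hα, hβ, hx⟩
    have hα' : alphaWord (v (.inr 0)) (v (.inr 2)) = v (.inr 1) := by
      rw [alphaWord, ← hα]; group
    have hβ' : betaWord (v (.inr 0)) (v (.inr 2)) = v (.inr 3) := by
      rw [betaWord, hα', hβ]; group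
    funext g
    rcases g with i | k
    · simp only [genValue, Sum.elim_inl, hα', hβ', ← hx i]
      group
    · fin_cases k
      exacts [rfl, hα', rfl, hβ']

def subst (n : ℕ) {p : ℕ} (q : Fin p → ℕ) : FreeGroup (QwGen n) →* FreeGroup (Fin 2) :=
  FreeGroup.lift (genValue n q (.of 0) (.of 1))

def keptRelator (n m : ℕ) : Fin (m + 1) → Fin m ⊕ (Fin n ⊕ Fin 3) :=
  Fin.lastCases (.inr (.inr 2)) .inl

theorem mk_subst_qwRel_eq_one (j : Fin m ⊕ (Fin n ⊕ Fin 3)) :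
    PresentedGroup.mk (Set.range (subst n q ∘ qwRel n m p r q w ∘ keptRelator n m))
      (subst n q (qwRel n m p r q w j)) = 1 := by
  obtain ⟨hα, hβ, hx⟩ :=
    (genValue_eq_iff r q w (genValue n q (FreeGroup.of (0 : Fin 2)) (.of 1))).mp rfl
  rcases j with j | i | t
  · exact PresentedGroup.one_of_mem ⟨j.castSucc, by simp [keptRelator]⟩
  · exact (congrArg _ (hx i)).trans (map_one _)
  · fin_cases t
    · exact (congrArg _ hα).trans (map_one _)
    · exact (congrArg _ hβ).trans (map_one _)
    · exact PresentedGroup.one_of_mem ⟨Fin.last m, by simp [keptRelator]⟩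

theorem mk_lift_subst_of (g : QwGen n) :
    PresentedGroup.mk (Set.range (qwRel n m p r q w))
      (FreeGroup.lift ![FreeGroup.of (.inr 0), FreeGroup.of (.inr 2)] (subst n q (.of g))) =
      .of g := by
  have hrel (j) : FreeGroup.lift (PresentedGroup.of (rels := Set.range (qwRel n m p r q w)))
      (qwRel n m p r q w j) = 1 := by
    rw [PresentedGroup.lift_of]
    exact PresentedGroup.one_of_mem ⟨j, rfl⟩
  rw [subst, FreeGroup.lift_apply_of, map_genValue, map_genValue]
  exact congrFun ((genValue_eq_iff r q w _).mpr ⟨hrel _, hrel _, fun i => hrel _⟩) g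

end Qw

theorem qw_two_generator_presentation_general (n m p : ℕ)
    (r : Fin m → FreeGroup (Fin n)) (q : Fin p → ℕ)
    (w : FreeGroup (Fin n)) :
    ∃ s : Fin (m + 1) → FreeGroup (Fin 2),
      Nonempty (PresentedGroup (Set.range s) ≃*
        PresentedGroup (Set.range (qwRel n m p r q w))) := by
  refine ⟨Qw.subst n q ∘ qwRel n m p r q w ∘ Qw.keptRelator n m,
    ⟨PresentedGroup.mulEquivOfSubstitution (Qw.subst n q)
      ![FreeGroup.of (.inr 0), FreeGroup.of (.inr 2)] ?_ ?_ ?_ (Qw.mk_lift_subst_of r q w)⟩⟩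
  · rintro _ ⟨j, rfl⟩
    exact Qw.mk_subst_qwRel_eq_one r q w j
  · rw [Set.range_comp]
    exact Set.image_mono (Set.range_comp_subset_range _ _)
  · intro b
    fin_cases b <;> rfl

/-- Let `P = (x₁,…,xₙ : r₁,…,r_m)` be a finite presentation and
`w` a word in `x₁,…,xₙ`, and let `G_w` be the group presented by `Q_w`.  Then `G_w`
admits a presentation with 2 generators and `m+1` relators: there exist `m+1`
elements of the free group of rank 2 such that the corresponding presented group is
isomorphic to `G_w`. -/
theorem qw_two_generator_presentation (n m p : ℕ) (hp1 : 1 ≤ p) (hpn : p ≤ n)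
    (r : Fin m → FreeGroup (Fin n)) (q : Fin p → ℕ)
    (w : FreeGroup (Fin n)) :
    ∃ s : Fin (m + 1) → FreeGroup (Fin 2),
      Nonempty (PresentedGroup (Set.range s) ≃*
        PresentedGroup (Set.range (qwRel n m p r q w))) :=
  qw_two_generator_presentation_general n m p r q w
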